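/- Non-asymptotic lower bound for description-length regularization (structural risk minimization): let P be a full-support probability mass function on the finite set of d-policies, let δ ∈ (0,1), and define reg(π) := √((−2·log₂ P(π) + log₂ e + log₂(1/δ))/(2N)). Let π_SRM be a maximizer over all d-policies of α_train(π;π*) − reg(π). Then for every probability mass function Q on d-policies, with probability at least 1−δ over the i.i.d. uniform draw of the training contexts: α(π_SRM;π*) ≥ max over d-policies π of (α(π;π*) − 2·reg(π)) ≥ E_{π∼Q}[α(π;π*)] − √(2/N)·E_{π∼Q}[√(−2·log₂ P(π) + log₂ e + log₂(1/δ))]. -/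

import Mathlib

open Finset

variable {S β : Type} [Fintype S] [DecidableEq S] [DecidableEq β]

/-- Accuracy of a d-policy `π` w.r.t. the ground truth `πs`. -/
noncomputable def accuracy (A : S → Finset β) (π πs : ∀ s : S, {a : β // a ∈ A s}) : ℝ :=
  (∑ s : S, if π s = πs s then (1 : ℝ) else 0) / (Fintype.card S : ℝ)

/-- Training accuracy of a d-policy `π` on the training contexts `shat`. -/
noncomputable def trainAccuracy (A : S → Finset β) {N : ℕ} (shat : Fin N → S)
    (π πs : ∀ s : S, {a : β // a ∈ A s}) : ℝ :=
  (∑ i : Fin N, if π (shat i) = πs (shat i) then (1 : ℝ) else 0) / (N : ℝ)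

/-- The description-length regularizer
`reg(π) = √((−2 log₂ P(π) + log₂ e + log₂(1/δ))/(2N))`. -/
noncomputable def reg (A : S → Finset β) (P : (∀ s : S, {a : β // a ∈ A s}) → ℝ)
    (δ : ℝ) (N : ℕ) (π : ∀ s : S, {a : β // a ∈ A s}) : ℝ :=
  Real.sqrt ((-2 * Real.logb 2 (P π) + Real.logb 2 (Real.exp 1) +
    Real.logb 2 (1 / δ)) / (2 * (N : ℝ)))

/-!
For a fixed policy `π` the indicators of `π(ŝᵢ) = π*(ŝᵢ)` are i.i.d. with mean `α(π; π*)`, so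
Hoeffding's inequality bounds the probability that training accuracy and accuracy differ by
more than `reg(π)` by `2 exp(-2N reg(π)²) = 2 exp(-L(π)) ≤ δ P(π)`, where
`L(π) = -2 log₂ P(π) + log₂ e + log₂(1/δ)`. A union bound weighted by `P` shows that with
probability at least `1 - δ` all policies are `reg`-accurate at once. On that event the SRM
maximizer is within `2 reg(π)` of every `π`, and the `Q`-average of `α - 2 reg` lies below its
maximum, where `2 reg(π) = √(2/N) √L(π)`.
-/

section Hoeffding

open MeasureTheory ProbabilityTheory Real

lemma measureReal_pi_sum_ge_le {Ω : Type*} [MeasurableSpace Ω] {ν : Measure Ω}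
    [IsProbabilityMeasure ν] {g : Ω → ℝ} {c : NNReal} (hg : HasSubgaussianMGF g c ν)
    (N : ℕ) {ε : ℝ} (hε : 0 ≤ ε) :
    (Measure.pi fun _ : Fin N => ν).real {x | ε ≤ ∑ i, g (x i)} ≤
      exp (-ε ^ 2 / (2 * N * c)) := by
  have hindep : iIndepFun (fun (i : Fin N) (x : Fin N → Ω) => g (x i))
      (Measure.pi fun _ => ν) :=
    iIndepFun_pi fun _ => hg.aemeasurable
  have hsub : ∀ i ∈ (univ : Finset (Fin N)),
      HasSubgaussianMGF (fun x : Fin N → Ω => g (x i)) c (Measure.pi fun _ => ν) := by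
    intro i _
    refine HasSubgaussianMGF.of_map (Y := fun x : Fin N → Ω => x i)
      (measurable_pi_apply i).aemeasurable ?_
    rwa [(measurePreserving_eval (fun _ => ν) i).map_eq]
  simpa [mul_assoc] using HasSubgaussianMGF.measure_sum_ge_le_of_iIndepFun hindep hsub hε

lemma measureReal_pi_le_abs_sum_sub_integral_le {Ω : Type*} [MeasurableSpace Ω]
    {ν : Measure Ω} [IsProbabilityMeasure ν] {f : Ω → ℝ} (hf : Measurable f) {a b : ℝ}
    (hab : ∀ ω, f ω ∈ Set.Icc a b) (N : ℕ) {ε : ℝ} (hε : 0 ≤ ε) :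
    (Measure.pi fun _ : Fin N => ν).real {x | N * ε ≤ |∑ i, (f (x i) - ν[f])|} ≤
      2 * exp (-2 * N * ε ^ 2 / (b - a) ^ 2) := by
  have hg := hasSubgaussianMGF_of_mem_Icc hf.aemeasurable (ae_of_all ν hab)
  have hexp : -((N : ℝ) * ε) ^ 2 / (2 * N * ((‖b - a‖₊ / 2) ^ 2 : NNReal)) =
      -2 * N * ε ^ 2 / (b - a) ^ 2 := by
    push_cast
    rw [Real.norm_eq_abs, div_pow, sq_abs]
    rcases eq_or_ne (N : ℝ) 0 with hN | hN
    · simp [hN]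
    · field_simp
  have hNε : 0 ≤ (N : ℝ) * ε := by positivity
  calc _ ≤ (Measure.pi fun _ : Fin N => ν).real
        ({x | N * ε ≤ ∑ i, (f (x i) - ν[f])} ∪ {x | N * ε ≤ ∑ i, -(f (x i) - ν[f])}) := by
        refine measureReal_mono (fun x hx => ?_)
        simp only [Set.mem_ofPred_eq, Set.mem_union, sum_neg_distrib] at hx ⊢
        exact le_abs.1 hx
    _ ≤ _ := measureReal_union_le _ _
    _ ≤ 2 * exp (-2 * N * ε ^ 2 / (b - a) ^ 2) := by
        rw [two_mul, ← hexp]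
        exact add_le_add (measureReal_pi_sum_ge_le hg N hNε)
          (measureReal_pi_sum_ge_le hg.neg N hNε)

section Uniform

variable {T : Type*} [Fintype T] [MeasurableSpace T] [MeasurableSingletonClass T]

lemma uniformOn_univ_real_singleton (t : T) :
    (uniformOn (Set.univ : Set T)).real {t} = (Fintype.card T : ℝ)⁻¹ := by
  simp [measureReal_def, uniformOn_univ]

lemma integral_uniformOn_univ (f : T → ℝ) :
    ∫ t, f t ∂uniformOn (Set.univ : Set T) = (∑ t, f t) / Fintype.card T := by
  rw [integral_fintype .of_finite]
  simp [uniformOn_univ_real_singleton, ← Finset.mul_sum, div_eq_inv_mul]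

lemma pi_uniformOn_univ_real_finset (N : ℕ) (s : Finset (Fin N → T)) :
    (Measure.pi fun _ : Fin N => uniformOn (Set.univ : Set T)).real s =
      #s / (Fintype.card T : ℝ) ^ N := by
  rw [← sum_measureReal_singleton]
  simp [measureReal_def, Measure.pi_singleton, uniformOn_univ, div_eq_mul_inv]

end Uniform

lemma card_le_abs_sum_sub_mean_le {T : Type*} [Fintype T] [Nonempty T] {f : T → ℝ} {a b : ℝ}
    (hab : ∀ t, f t ∈ Set.Icc a b) (N : ℕ) {ε : ℝ} (hε : 0 ≤ ε) :
    (#{x : Fin N → T | N * ε ≤ |∑ i, (f (x i) - (∑ t, f t) / Fintype.card T)|} : ℝ) ≤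
      2 * exp (-2 * N * ε ^ 2 / (b - a) ^ 2) * (Fintype.card T : ℝ) ^ N := by
  let : MeasurableSpace T := ⊤
  have h := measureReal_pi_le_abs_sum_sub_integral_le (ν := uniformOn Set.univ)
    (Measurable.of_discrete (f := f)) hab N hε
  rw [integral_uniformOn_univ] at h
  rw [← div_le_iff₀ (by positivity), ← pi_uniformOn_univ_real_finset, coe_filter_univ]
  exact h

end Hoeffding

section DescriptionLength

open Real

noncomputable def descriptionLength (p δ : ℝ) : ℝ :=
  -2 * logb 2 p + logb 2 (exp 1) + logb 2 (1 / δ)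

lemma two_mul_sqrt_div_two_mul (x : ℝ) {n : ℝ} (hn : 0 ≤ n) :
    2 * √(x / (2 * n)) = √(2 / n) * √x := by
  rw [← Real.sqrt_mul (by positivity), show 2 / n * x = 2 ^ 2 * (x / (2 * n)) by ring,
    Real.sqrt_mul (by positivity), Real.sqrt_sq zero_le_two]

lemma descriptionLength_nonneg {p δ : ℝ} (hp0 : 0 < p) (hp1 : p ≤ 1) (hδ0 : 0 < δ)
    (hδ1 : δ ≤ 1) : 0 ≤ descriptionLength p δ := by
  have := logb_nonpos one_lt_two hp0.le hp1
  have := logb_nonneg one_lt_two (one_le_exp zero_le_one)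
  have := logb_nonneg one_lt_two (one_le_one_div hδ0 hδ1)
  rw [descriptionLength]
  linarith

lemma two_mul_exp_neg_descriptionLength_le {p δ : ℝ} (hp0 : 0 < p) (hp1 : p ≤ 1) (hδ0 : 0 < δ)
    (hδ1 : δ ≤ 1) : 2 * exp (-descriptionLength p δ) ≤ δ * p := by
  set X := descriptionLength p δ
  have hlog2 : 0 < log 2 := log_pos one_lt_two
  have hlog2X : log 2 * X = 1 - 2 * log p - log δ := by
    simp only [X, descriptionLength, logb, one_div, log_inv, log_exp]
    field_simp
    ring
  have hlogp : log p ≤ 0 := log_nonpos hp0.le hp1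
  have hlogδ : log δ ≤ 0 := log_nonpos hδ0.le hδ1
  have hX : 0 ≤ X := descriptionLength_nonneg hp0 hp1 hδ0 hδ1
  have hXle : log 2 * X ≤ X := mul_le_of_le_one_left hX (log_two_lt_d9.le.trans (by norm_num))
  calc 2 * exp (-X) = exp (log 2 - X) := by rw [exp_sub, exp_log two_pos, div_eq_mul_inv, exp_neg]
    _ ≤ exp (log δ + log p) := by
        -- `log 2 - X ≤ log 2 - log 2 * X = log 2 - 1 + 2 log p + log δ ≤ log p + log δ`
        gcongr
        nlinarith [log_two_lt_d9]
    _ = δ * p := by rw [exp_add, exp_log hδ0, exp_log hp0]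

end DescriptionLength

lemma ciSup_sub_two_mul_le_of_abs_sub_le {ι : Type*} [Finite ι] {a t r : ι → ℝ} {j : ι}
    (h : ∀ i, |a i - t i| ≤ r i) (hj : ∀ i, t i - r i ≤ t j - r j) :
    ⨆ i, (a i - 2 * r i) ≤ a j := by
  have : Nonempty ι := ⟨j⟩
  refine ciSup_le fun i => ?_
  have hi := abs_le.1 (h i)
  have hj' := abs_le.1 (h j)
  linarith [hj i]

lemma sum_mul_le_ciSup {ι : Type*} [Fintype ι] {w f : ι → ℝ} (hw0 : ∀ i, 0 ≤ w i)
    (hw1 : ∑ i, w i = 1) : ∑ i, w i * f i ≤ ⨆ i, f i :=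
  calc ∑ i, w i * f i ≤ ∑ i, w i * ⨆ j, f j :=
        sum_le_sum fun i _ => mul_le_mul_of_nonneg_left
          (le_ciSup (Set.finite_range f).bddAbove i) (hw0 i)
    _ = ⨆ i, f i := by rw [← sum_mul, hw1, one_mul]

lemma card_filter_exists_le {ι α : Type*} [Fintype ι] (s : Finset α) (p : ι → α → Prop)
    [∀ i, DecidablePred (p i)] [DecidablePred fun x => ∃ i, p i x] :
    #{x ∈ s | ∃ i, p i x} ≤ ∑ i, #{x ∈ s | p i x} := by
  classical
  calc #{x ∈ s | ∃ i, p i x} ≤ #(univ.biUnion fun i => {x ∈ s | p i x}) :=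
        card_le_card fun x hx => by
          obtain ⟨hxs, i, hi⟩ := mem_filter.1 hx
          exact mem_biUnion.2 ⟨i, mem_univ i, mem_filter.2 ⟨hxs, hi⟩⟩
    _ ≤ ∑ i, #{x ∈ s | p i x} := card_biUnion_le

section Policies

variable (A : S → Finset β) (πs : ∀ s : S, {a : β // a ∈ A s})

omit [Fintype S] [DecidableEq S] [DecidableEq β] in
lemma reg_eq_sqrt_descriptionLength (P : (∀ s : S, {a : β // a ∈ A s}) → ℝ) (δ : ℝ) (N : ℕ)
    (π : ∀ s : S, {a : β // a ∈ A s}) :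
    reg A P δ N π = √(descriptionLength (P π) δ / (2 * N)) :=
  rfl

omit [DecidableEq S] in
lemma natCast_mul_trainAccuracy_sub_accuracy {N : ℕ} (hN : N ≠ 0) (shat : Fin N → S)
    (π : ∀ s : S, {a : β // a ∈ A s}) :
    N * (trainAccuracy A shat π πs - accuracy A π πs) =
      ∑ i, ((if π (shat i) = πs (shat i) then (1 : ℝ) else 0) -
        (∑ s, if π s = πs s then (1 : ℝ) else 0) / Fintype.card S) := by
  rw [trainAccuracy, accuracy, sum_sub_distrib, sum_const, card_univ, Fintype.card_fin,
    nsmul_eq_mul]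
  field_simp

omit [DecidableEq S] in
lemma card_reg_lt_abs_accuracy_sub_trainAccuracy_le [Nonempty S] {N : ℕ} (hN : N ≠ 0)
    (P : (∀ s : S, {a : β // a ∈ A s}) → ℝ) {δ : ℝ} (π : ∀ s : S, {a : β // a ∈ A s})
    (hP0 : 0 < P π) (hP1 : P π ≤ 1) (hδ0 : 0 < δ) (hδ1 : δ ≤ 1) :
    (#{shat : Fin N → S | reg A P δ N π < |accuracy A π πs - trainAccuracy A shat π πs|} : ℝ)
      ≤ δ * P π * (Fintype.card S : ℝ) ^ N := by
  have hX := descriptionLength_nonneg hP0 hP1 hδ0 hδ1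
  have hreg : 2 * N * reg A P δ N π ^ 2 = descriptionLength (P π) δ := by
    rw [reg_eq_sqrt_descriptionLength, Real.sq_sqrt (by positivity)]
    field_simp
  have hindicator : ∀ s, (if π s = πs s then (1 : ℝ) else 0) ∈ Set.Icc 0 1 := by
    intro s
    split_ifs <;> simp
  calc (#{shat : Fin N → S | reg A P δ N π < |accuracy A π πs - trainAccuracy A shat π πs|} : ℝ)
      ≤ #{shat : Fin N → S | N * reg A P δ N π ≤
          |∑ i, ((if π (shat i) = πs (shat i) then (1 : ℝ) else 0) -
            (∑ s, if π s = πs s then (1 : ℝ) else 0) / Fintype.card S)|} := by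
        refine Nat.cast_le.mpr (card_le_card fun shat hshat => ?_)
        simp only [mem_filter, mem_univ, true_and] at hshat ⊢
        rw [← natCast_mul_trainAccuracy_sub_accuracy A πs hN, abs_mul, Nat.abs_cast,
          abs_sub_comm]
        exact mul_le_mul_of_nonneg_left hshat.le (Nat.cast_nonneg N)
    _ ≤ 2 * Real.exp (-2 * N * reg A P δ N π ^ 2 / (1 - 0) ^ 2) * (Fintype.card S : ℝ) ^ N :=
        card_le_abs_sum_sub_mean_le hindicator N (Real.sqrt_nonneg _)
    _ ≤ δ * P π * (Fintype.card S : ℝ) ^ N := by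
        rw [sub_zero, one_pow, div_one, neg_mul, neg_mul, hreg]
        exact mul_le_mul_of_nonneg_right (two_mul_exp_neg_descriptionLength_le hP0 hP1 hδ0 hδ1)
          (by positivity)

lemma card_exists_reg_lt_abs_accuracy_sub_trainAccuracy_le [Nonempty S] {N : ℕ} (hN : N ≠ 0)
    {P : (∀ s : S, {a : β // a ∈ A s}) → ℝ} (hP0 : ∀ π, 0 < P π)
    (hP1 : ∑ π : ∀ s : S, {a : β // a ∈ A s}, P π = 1) {δ : ℝ} (hδ0 : 0 < δ) (hδ1 : δ ≤ 1) :
    (#{shat : Fin N → S | ∃ π : ∀ s : S, {a : β // a ∈ A s},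
        reg A P δ N π < |accuracy A π πs - trainAccuracy A shat π πs|} : ℝ) ≤
      δ * (Fintype.card S : ℝ) ^ N := by
  have hP_le_one : ∀ π, P π ≤ 1 := fun π =>
    hP1 ▸ single_le_sum (fun π' _ => (hP0 π').le) (mem_univ π)
  calc (#{shat : Fin N → S | ∃ π : ∀ s : S, {a : β // a ∈ A s},
        reg A P δ N π < |accuracy A π πs - trainAccuracy A shat π πs|} : ℝ)
      ≤ ∑ π : ∀ s : S, {a : β // a ∈ A s}, (#{shat : Fin N → S |
          reg A P δ N π < |accuracy A π πs - trainAccuracy A shat π πs|} : ℝ) :=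
        mod_cast card_filter_exists_le _ _
    _ ≤ ∑ π : ∀ s : S, {a : β // a ∈ A s}, δ * P π * (Fintype.card S : ℝ) ^ N :=
        sum_le_sum fun π _ =>
          card_reg_lt_abs_accuracy_sub_trainAccuracy_le A πs hN P π (hP0 π) (hP_le_one π) hδ0 hδ1
    _ = δ * (Fintype.card S : ℝ) ^ N := by rw [← sum_mul, ← mul_sum, hP1, mul_one]

end Policies

theorem srm_description_length_lower_bound_general [Nonempty S]
    (A : S → Finset β)
    (πs : ∀ s : S, {a : β // a ∈ A s}) (N : ℕ) (hN : 1 ≤ N)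
    (P Q : (∀ s : S, {a : β // a ∈ A s}) → ℝ)
    (hP0 : ∀ π, 0 < P π) (hP1 : ∑ π : ∀ s : S, {a : β // a ∈ A s}, P π = 1)
    (hQ0 : ∀ π, 0 ≤ Q π) (hQ1 : ∑ π : ∀ s : S, {a : β // a ∈ A s}, Q π = 1)
    (δ : ℝ) (hδ0 : 0 < δ) (hδ1 : δ < 1)
    (πSRM : (Fin N → S) → (∀ s : S, {a : β // a ∈ A s}))
    (hSRM : ∀ shat : Fin N → S, ∀ π : ∀ s : S, {a : β // a ∈ A s},
      trainAccuracy A shat π πs - reg A P δ N π ≤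
        trainAccuracy A shat (πSRM shat) πs - reg A P δ N (πSRM shat)) :
    1 - δ ≤
      (Nat.card {shat : Fin N → S //
          (⨆ π : ∀ s : S, {a : β // a ∈ A s},
              (accuracy A π πs - 2 * reg A P δ N π)) ≤ accuracy A (πSRM shat) πs ∧
          (∑ π : ∀ s : S, {a : β // a ∈ A s}, Q π * accuracy A π πs) -
              Real.sqrt (2 / (N : ℝ)) *
                (∑ π : ∀ s : S, {a : β // a ∈ A s},
                  Q π * Real.sqrt (-2 * Real.logb 2 (P π) + Real.logb 2 (Real.exp 1) +
                    Real.logb 2 (1 / δ))) ≤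
            ⨆ π : ∀ s : S, {a : β // a ∈ A s},
              (accuracy A π πs - 2 * reg A P δ N π)} : ℝ) /
        ((Fintype.card S : ℝ) ^ N) := by
  classical
  have hsecond : (∑ π : ∀ s : S, {a : β // a ∈ A s}, Q π * accuracy A π πs) -
      √(2 / N) * (∑ π : ∀ s : S, {a : β // a ∈ A s}, Q π * √(descriptionLength (P π) δ)) ≤
      ⨆ π : ∀ s : S, {a : β // a ∈ A s}, (accuracy A π πs - 2 * reg A P δ N π) := by
    calc _ = ∑ π : ∀ s : S, {a : β // a ∈ A s}, Q π * (accuracy A π πs - 2 * reg A P δ N π) := by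
          rw [mul_sum, ← sum_sub_distrib]
          refine sum_congr rfl fun π _ => ?_
          rw [reg_eq_sqrt_descriptionLength, two_mul_sqrt_div_two_mul _ (Nat.cast_nonneg N)]
          ring
      _ ≤ _ := sum_mul_le_ciSup hQ0 hQ1
  have hbad := card_exists_reg_lt_abs_accuracy_sub_trainAccuracy_le A πs
    (Nat.one_le_iff_ne_zero.mp hN) hP0 hP1 hδ0 hδ1.le
  have hsplit := card_filter_add_card_filter_not (s := (univ : Finset (Fin N → S)))
    (fun shat => ∀ π : ∀ s : S, {a : β // a ∈ A s},
      |accuracy A π πs - trainAccuracy A shat π πs| ≤ reg A P δ N π)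
  simp only [not_forall, not_le, card_univ, Fintype.card_fun, Fintype.card_fin] at hsplit
  rw [Nat.card_eq_fintype_card, Fintype.card_subtype, le_div_iff₀ (by positivity)]
  calc (1 - δ) * (Fintype.card S : ℝ) ^ N
      ≤ #{shat : Fin N → S | ∀ π : ∀ s : S, {a : β // a ∈ A s},
          |accuracy A π πs - trainAccuracy A shat π πs| ≤ reg A P δ N π} := by
        have := congrArg (Nat.cast (R := ℝ)) hsplit
        push_cast at this
        linarith
    _ ≤ _ := Nat.cast_le.mpr <| card_le_card fun shat hshat => by
        rw [mem_filter] at hshat ⊢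
        exact ⟨hshat.1, ciSup_sub_two_mul_le_of_abs_sub_le hshat.2 (hSRM shat), hsecond⟩

/-- Non-asymptotic lower bound for description-length regularization (SRM): if `P` is
a full-support pmf on d-policies, `Q` any pmf on d-policies, and `π_SRM` (a function of
the training draw) maximizes `α_train(π;π*) − reg(π)` over all d-policies, then with
probability at least `1 − δ` over the i.i.d. uniform draw of the training contexts,
`α(π_SRM;π*) ≥ max_π (α(π;π*) − 2 reg(π))
  ≥ E_{π∼Q}[α(π;π*)] − √(2/N) · E_{π∼Q}[√(−2 log₂ P(π) + log₂ e + log₂(1/δ))]`. -/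
theorem srm_description_length_lower_bound [Nonempty S]
    (A : S → Finset β) (hA : ∀ s, (A s).Nonempty)
    (πs : ∀ s : S, {a : β // a ∈ A s}) (N : ℕ) (hN : 1 ≤ N)
    (P Q : (∀ s : S, {a : β // a ∈ A s}) → ℝ)
    (hP0 : ∀ π, 0 < P π) (hP1 : ∑ π : ∀ s : S, {a : β // a ∈ A s}, P π = 1)
    (hQ0 : ∀ π, 0 ≤ Q π) (hQ1 : ∑ π : ∀ s : S, {a : β // a ∈ A s}, Q π = 1)
    (δ : ℝ) (hδ0 : 0 < δ) (hδ1 : δ < 1)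
    (πSRM : (Fin N → S) → (∀ s : S, {a : β // a ∈ A s}))
    (hSRM : ∀ shat : Fin N → S, ∀ π : ∀ s : S, {a : β // a ∈ A s},
      trainAccuracy A shat π πs - reg A P δ N π ≤
        trainAccuracy A shat (πSRM shat) πs - reg A P δ N (πSRM shat)) :
    1 - δ ≤
      (Nat.card {shat : Fin N → S //
          (⨆ π : ∀ s : S, {a : β // a ∈ A s},
              (accuracy A π πs - 2 * reg A P δ N π)) ≤ accuracy A (πSRM shat) πs ∧
          (∑ π : ∀ s : S, {a : β // a ∈ A s}, Q π * accuracy A π πs) -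
              Real.sqrt (2 / (N : ℝ)) *
                (∑ π : ∀ s : S, {a : β // a ∈ A s},
                  Q π * Real.sqrt (-2 * Real.logb 2 (P π) + Real.logb 2 (Real.exp 1) +
                    Real.logb 2 (1 / δ))) ≤
            ⨆ π : ∀ s : S, {a : β // a ∈ A s},
              (accuracy A π πs - 2 * reg A P δ N π)} : ℝ) /
        ((Fintype.card S : ℝ) ^ N) :=
  srm_description_length_lower_bound_general A πs N hN P Q hP0 hP1 hQ0 hQ1 δ hδ0 hδ1 πSRM hSRM
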